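/- Let V be a finite-dimensional real normed vector space and let (x_{s,t})_{s<t} be a family of points in V such that for every ε > 0 there is R such that for all s,s' < −R and t,t' > R with |s−s'|,|t−t'| ≤ 1, ‖x_{s,t} − x_{s',t'}‖ < ε. If the set {x_{s,t}} is bounded, then the set of all limits lim x_{s_n,t_n} with t_n → ∞, s_n → −∞ is a nonempty, compact and connected subset of V. -/
import Mathlib


open Filter Topology

/-- Discrete chaining lemma: a property stable under unit steps inside a
"convex" condition `C` propagates along any bounded gap. -/
lemma chain_aux {P C : ℝ → Prop}
    (hC : ∀ a b c : ℝ, C a → C c → a ≤ b → b ≤ c → C b)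
    (hstep : ∀ a b : ℝ, C a → C b → |a - b| ≤ 1 → P a → P b) :
    ∀ n : ℕ, ∀ a b : ℝ, C a → C b → |a - b| ≤ n → P a → P b := by
  intro n
  induction n with
  | zero =>
    intro a b _ _ hab hP
    have : a = b := by
      have := abs_nonneg (a - b)
      have h0 : |a - b| = 0 := le_antisymm (by simpa using hab) this
      have := abs_eq_zero.mp h0
      linarith
    rwa [← this]
  | succ n ih =>
    intro a b hCa hCb hab hP
    by_cases h1 : |a - b| ≤ 1
    · exact hstep a b hCa hCb h1 hP
    · push_neg at h1
      rcases le_total a b with hle | hle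
      · have habs : |a - b| = b - a := by
          rw [abs_sub_comm]; exact abs_of_nonneg (by linarith)
        have hba : 1 < b - a := by rwa [habs] at h1
        have hCc : C (a + 1) := hC a (a + 1) b hCa hCb (by linarith) (by linarith)
        have hP1 : P (a + 1) := hstep a (a + 1) hCa hCc (by simp) hP
        have hcast : |a - b| ≤ (n : ℝ) + 1 := by
          simpa [Nat.cast_succ] using hab
        refine ih (a + 1) b hCc hCb ?_ hP1
        have : |a + 1 - b| = b - a - 1 := by
          rw [abs_sub_comm]; rw [abs_of_nonneg (by linarith)]; ring
        rw [this]
        rw [habs] at hcast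
        linarith
      · have habs : |a - b| = a - b := abs_of_nonneg (by linarith)
        have hba : 1 < a - b := by rwa [habs] at h1
        have hCc : C (a - 1) := hC b (a - 1) a hCb hCa (by linarith) (by linarith)
        have hP1 : P (a - 1) := hstep a (a - 1) hCa hCc (by simp) hP
        have hcast : |a - b| ≤ (n : ℝ) + 1 := by
          simpa [Nat.cast_succ] using hab
        refine ih (a - 1) b hCc hCb ?_ hP1
        have : |a - 1 - b| = a - b - 1 := by rw [abs_of_nonneg (by linarith)]; ring
        rw [this]
        rw [habs] at hcast
        linarith

/-- Under boundedness and controlled oscillation, the cluster set of a family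
(x s t) (s < t, t → ∞, s → −∞) is nonempty, compact and connected. -/
theorem stmt6 {V : Type*} [NormedAddCommGroup V] [NormedSpace ℝ V]
    [FiniteDimensional ℝ V]
    (x : ℝ → ℝ → V)
    (hosc : ∀ ε : ℝ, 0 < ε → ∃ R : ℝ, ∀ s s' t t' : ℝ,
      s < -R → s' < -R → R < t → R < t' → |s - s'| ≤ 1 → |t - t'| ≤ 1 →
      ‖x s t - x s' t'‖ < ε)
    (hbdd : ∃ M : ℝ, ∀ s t : ℝ, s < t → ‖x s t‖ ≤ M) :
    let K := {v : V | ∃ s t : ℕ → ℝ, Tendsto s atTop atBot ∧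
      Tendsto t atTop atTop ∧ (∀ n, s n < t n) ∧
      Tendsto (fun n => x (s n) (t n)) atTop (𝓝 v)}
    K.Nonempty ∧ IsCompact K ∧ IsConnected K := by
  intro K
  obtain ⟨M, hM⟩ := hbdd
  -- Approximation from inside K at any scale
  have hKapprox : ∀ v ∈ K, ∀ ε : ℝ, 0 < ε → ∀ N : ℝ,
      ∃ s t : ℝ, s < -N ∧ N < t ∧ s < t ∧ ‖x s t - v‖ < ε := by
    rintro v ⟨s, t, hs, ht, hst, hconv⟩ ε hε N
    have h1 : ∀ᶠ n in atTop, s n < -N := hs.eventually (eventually_lt_atBot (-N))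
    have h2 : ∀ᶠ n in atTop, N < t n := ht.eventually (eventually_gt_atTop N)
    have h3 : ∀ᶠ n in atTop, ‖x (s n) (t n) - v‖ < ε := by
      have := Metric.tendsto_atTop.mp hconv ε hε
      obtain ⟨N', hN'⟩ := this
      filter_upwards [eventually_ge_atTop N'] with n hn
      simpa [dist_eq_norm] using hN' n hn
    obtain ⟨n, hn1, hn2, hn3⟩ := (h1.and (h2.and h3)).exists
    exact ⟨s n, t n, hn1, hn2, hst n, hn3⟩
  -- K is bounded by M
  have hKbdd : ∀ v ∈ K, ‖v‖ ≤ M := by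
    rintro v ⟨s, t, _, _, hst, hconv⟩
    exact le_of_tendsto hconv.norm
      (Eventually.of_forall fun n => hM _ _ (hst n))
  -- Subsequence extraction
  have hsub : ∀ (s t : ℕ → ℝ), (∀ n, s n < -(n : ℝ)) → (∀ n : ℕ, (n : ℝ) < t n) →
      ∃ v ∈ K, ∃ φ : ℕ → ℕ, StrictMono φ ∧
        Tendsto (fun n => x (s (φ n)) (t (φ n))) atTop (𝓝 v) := by
    intro s t hs ht
    have hslt : ∀ n, s n < t n := fun n => by
      have h1 := hs n; have h2 := ht n; have h3 : (0 : ℝ) ≤ n := Nat.cast_nonneg n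
      linarith
    have hb : ∀ n, x (s n) (t n) ∈ Metric.closedBall (0 : V) M := fun n => by
      simpa [Metric.mem_closedBall, dist_zero_right] using hM _ _ (hslt n)
    obtain ⟨v, _, φ, hφ, hconv⟩ :=
      tendsto_subseq_of_bounded Metric.isBounded_closedBall hb
    have hφn : ∀ n : ℕ, (n : ℝ) ≤ φ n := fun n => by exact_mod_cast hφ.id_le n
    have hcastTop : Tendsto (fun n : ℕ => ((φ n : ℕ) : ℝ)) atTop atTop :=
      tendsto_natCast_atTop_atTop.comp hφ.tendsto_atTop
    have hnegφ : Tendsto (fun n : ℕ => -((φ n : ℕ) : ℝ)) atTop atBot :=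
      tendsto_neg_atTop_atBot.comp hcastTop
    have hsφ : Tendsto (fun n => s (φ n)) atTop atBot :=
      tendsto_atBot_mono (fun n => (hs (φ n)).le) hnegφ
    have htφ : Tendsto (fun n => t (φ n)) atTop atTop := by
      apply tendsto_atTop_mono (fun n => (ht (φ n)).le)
      exact hcastTop
    exact ⟨v, ⟨fun n => s (φ n), fun n => t (φ n), hsφ, htφ,
      fun n => hslt (φ n), hconv⟩, φ, hφ, hconv⟩
  -- Nonempty
  have hKne : K.Nonempty := by
    obtain ⟨v, hv, _⟩ := hsub (fun n => -(n : ℝ) - 1) (fun n => (n : ℝ) + 1)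
      (fun n => by show -(n : ℝ) - 1 < -(n : ℝ); linarith)
      (fun n => by show (n : ℝ) < (n : ℝ) + 1; linarith)
    exact ⟨v, hv⟩
  -- For large parameters, x s t is ε-close to K
  have hKnear : ∀ ε : ℝ, 0 < ε → ∃ N : ℝ, ∀ s t : ℝ, s < -N → N < t →
      ∃ v ∈ K, ‖x s t - v‖ < ε := by
    intro ε hε
    by_contra h
    push_neg at h
    have h' : ∀ n : ℕ, ∃ s t : ℝ, s < -(n : ℝ) ∧ ((n : ℝ) < t) ∧
        ∀ v ∈ K, ε ≤ ‖x s t - v‖ := by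
      intro n
      obtain ⟨s, t, h1, h2, h3⟩ := h n
      exact ⟨s, t, h1, h2, h3⟩
    choose s t hs ht hfar using h'
    obtain ⟨v, hvK, φ, _, hconv⟩ := hsub s t hs ht
    have h0 : Tendsto (fun n => ‖x (s (φ n)) (t (φ n)) - v‖) atTop (𝓝 0) := by
      have := (hconv.sub (tendsto_const_nhds (x := v))).norm
      simpa using this
    have : ε ≤ 0 :=
      ge_of_tendsto h0 (Eventually.of_forall fun n => hfar (φ n) v hvK)
    linarith
  -- K is closed
  have hKclosed : IsClosed K := by
    refine isClosed_of_closure_subset fun v hv => ?_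
    have hex : ∀ n : ℕ, ∃ s t : ℝ, s < -(n : ℝ) ∧ ((n : ℝ) < t) ∧
        ‖x s t - v‖ < 2 / ((n : ℝ) + 1) := by
      intro n
      obtain ⟨w, hwK, hw⟩ := Metric.mem_closure_iff.mp hv (1 / ((n : ℝ) + 1))
        (by positivity)
      obtain ⟨s, t, h1, h2, _, h4⟩ := hKapprox w hwK (1 / ((n : ℝ) + 1))
        (by positivity) n
      refine ⟨s, t, h1, h2, ?_⟩
      have hwv : ‖w - v‖ < 1 / ((n : ℝ) + 1) := by
        rw [← dist_eq_norm, dist_comm]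
        exact hw
      calc ‖x s t - v‖ ≤ ‖x s t - w‖ + ‖w - v‖ := norm_sub_le_norm_sub_add_norm_sub _ _ _
        _ < 1 / ((n : ℝ) + 1) + 1 / ((n : ℝ) + 1) := by linarith
        _ = 2 / ((n : ℝ) + 1) := by ring
    choose s t hs ht hcv using hex
    obtain ⟨w, hwK, φ, hφ, hc⟩ := hsub s t hs ht
    have hφn : ∀ n : ℕ, (n : ℝ) ≤ φ n := fun n => by exact_mod_cast hφ.id_le n
    have hc2 : Tendsto (fun n => x (s (φ n)) (t (φ n))) atTop (𝓝 v) := by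
      rw [tendsto_iff_norm_sub_tendsto_zero]
      apply squeeze_zero (fun n => norm_nonneg _)
        (g := fun n : ℕ => 2 / ((n : ℝ) + 1))
      · intro n
        have h1 : ‖x (s (φ n)) (t (φ n)) - v‖ < 2 / ((φ n : ℝ) + 1) := hcv (φ n)
        have h2 : 2 / ((φ n : ℝ) + 1) ≤ 2 / ((n : ℝ) + 1) := by
          apply div_le_div_of_nonneg_left (by norm_num) (by positivity)
          linarith [hφn n]
        linarith
      · have := tendsto_one_div_add_atTop_nhds_zero_nat.const_mul (2 : ℝ)
        simpa [div_eq_mul_inv, mul_comm] using this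
    exact tendsto_nhds_unique hc hc2 ▸ hwK
  -- K is compact
  have hKsub : K ⊆ Metric.closedBall (0 : V) M := fun v hv => by
    simpa [Metric.mem_closedBall, dist_zero_right] using hKbdd v hv
  have hKcomp : IsCompact K :=
    (isCompact_closedBall (0 : V) M).of_isClosed_subset hKclosed hKsub
  refine ⟨hKne, hKcomp, hKne, ?_⟩
  -- Connectedness
  rw [isPreconnected_iff_subset_of_fully_disjoint_closed hKclosed]
  intro u w hu hw hKuw huw
  by_contra hcon
  push_neg at hcon
  obtain ⟨hnu, hnw⟩ := hcon
  obtain ⟨b0, hb0K, hb0u⟩ := Set.not_subset.mp hnu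
  obtain ⟨a0, ha0K, ha0w⟩ := Set.not_subset.mp hnw
  have hb0w : b0 ∈ w := (hKuw hb0K).resolve_left hb0u
  have ha0u : a0 ∈ u := (hKuw ha0K).resolve_right ha0w
  set A : Set V := K ∩ u with hA
  set B : Set V := K ∩ w with hB
  have hAcomp : IsCompact A := hKcomp.inter_right hu
  have hBclosed : IsClosed B := hKclosed.inter hw
  have hABdisj : Disjoint A B :=
    huw.mono Set.inter_subset_right Set.inter_subset_right
  obtain ⟨r, hr, hrdist⟩ := EMetric.exists_pos_forall_lt_edist hAcomp hBclosed hABdisj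
  have hd : ∀ p ∈ A, ∀ q ∈ B, (r : ℝ) < dist p q := by
    intro p hp q hq
    have h1 := hrdist p hp q hq
    rw [edist_dist, ← ENNReal.ofReal_coe_nnreal,
      ENNReal.ofReal_lt_ofReal_iff_of_nonneg (by positivity)] at h1
    exact h1
  set ε : ℝ := (r : ℝ) / 4 with hεdef
  have hε : 0 < ε := by positivity
  obtain ⟨R, hR⟩ := hosc ε hε
  obtain ⟨N, hN⟩ := hKnear ε hε
  set R0 : ℝ := max R N with hR0
  -- the "near A" predicate and the step lemma
  set nearA : ℝ → ℝ → Prop := fun s t => ∃ p ∈ A, ‖x s t - p‖ < ε with hnearA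
  have hstep : ∀ s s' t t' : ℝ, s < -R0 → s' < -R0 → R0 < t → R0 < t' →
      |s - s'| ≤ 1 → |t - t'| ≤ 1 → nearA s t → nearA s' t' := by
    rintro s s' t t' h1 h2 h3 h4 h5 h6 ⟨p, hpA, hp⟩
    have hRle : R ≤ R0 := le_max_left _ _
    have hNle : N ≤ R0 := le_max_right _ _
    obtain ⟨v, hvK, hv⟩ := hN s' t' (by linarith) (by linarith)
    have hosc' : ‖x s t - x s' t'‖ < ε :=
      hR s s' t t' (by linarith) (by linarith) (by linarith) (by linarith) h5 h6
    rcases hKuw hvK with hvu | hvw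
    · exact ⟨v, ⟨hvK, hvu⟩, hv⟩
    · exfalso
      have hdist : dist p v ≤ ‖p - x s t‖ + ‖x s t - x s' t'‖ + ‖x s' t' - v‖ := by
        rw [dist_eq_norm]
        calc ‖p - v‖ ≤ ‖p - x s' t'‖ + ‖x s' t' - v‖ :=
              norm_sub_le_norm_sub_add_norm_sub _ _ _
          _ ≤ ‖p - x s t‖ + ‖x s t - x s' t'‖ + ‖x s' t' - v‖ := by
              have := norm_sub_le_norm_sub_add_norm_sub p (x s t) (x s' t')
              linarith
      have hps : ‖p - x s t‖ < ε := by rwa [norm_sub_rev]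
      have := hd p hpA v ⟨hvK, hvw⟩
      have : (r : ℝ) < 3 * ε := by linarith
      rw [hεdef] at this
      linarith
  -- start and end points
  obtain ⟨s1, t1, hs1, ht1, _, hx1⟩ := hKapprox a0 ha0K ε hε R0
  obtain ⟨s2, t2, hs2, ht2, _, hx2⟩ := hKapprox b0 hb0K ε hε R0
  have hstart : nearA s1 t1 := ⟨a0, ⟨ha0K, ha0u⟩, hx1⟩
  -- chain in s
  obtain ⟨n1, hn1⟩ := exists_nat_ge |s1 - s2|
  have hmid : nearA s2 t1 := by
    refine chain_aux (P := fun s => nearA s t1) (C := fun s => s < -R0)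
      (fun a b c _ hc _ hbc => lt_of_le_of_lt hbc hc)
      (fun a b hCa hCb hab hP => hstep a b t1 t1 hCa hCb ht1 ht1 hab (by simp) hP)
      n1 s1 s2 hs1 hs2 hn1 hstart
  -- chain in t
  obtain ⟨n2, hn2⟩ := exists_nat_ge |t1 - t2|
  have hend : nearA s2 t2 := by
    refine chain_aux (P := fun t => nearA s2 t) (C := fun t => R0 < t)
      (fun a b c ha _ hab _ => lt_of_lt_of_le ha hab)
      (fun a b hCa hCb hab hP => hstep s2 s2 a b hs2 hs2 hCa hCb (by simp) hab hP)
      n2 t1 t2 ht1 ht2 hn2 hmid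
  obtain ⟨p, hpA, hp⟩ := hend
  have hqB : b0 ∈ B := ⟨hb0K, hb0w⟩
  have hdist : dist p b0 ≤ ‖p - x s2 t2‖ + ‖x s2 t2 - b0‖ :=
    dist_eq_norm p b0 ▸ norm_sub_le_norm_sub_add_norm_sub _ _ _
  have hps : ‖p - x s2 t2‖ < ε := by rwa [norm_sub_rev]
  have h1 := hd p hpA b0 hqB
  have : (r : ℝ) < 2 * ε := by linarith
  rw [hεdef] at this
  linarith
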